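/- Let η₊, η₋ solve −η'' + Vη = 0 with Wronskian W ≠ 0, and let δV be continuous and compactly supported. Define δη±(x) = −∫ q(x,y) δV(y) η±(y) dy where q(x,y) = W^{−1}(η₋(x)η₊(y) 1_{x≤y} + η₊(x)η₋(y) 1_{x≥y}). Then the first variation of the Wronskian, δW(x) = δη₊(x)η₋'(x) + η₊(x)δη₋'(x) − δη₊'(x)η₋(x) − η₊'(x)δη₋(x), equals −∫ η₊(y) η₋(y) δV(y) dy, independently of x. -/

import Mathlib

/-!
Splitting the kernel `q` at `y = x` writes `δη± = -(η₋ A± + η₊ B±) / W` with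
`A±(x) = ∫_x^∞ η₊ δV η±` and `B±(x) = ∫_{-∞}^x η₋ δV η±`. On differentiating, the
contributions of the moving endpoints cancel, so `δη±' = -(η₋' A± + η₊' B±) / W`.
Substituting into `δW`, the `A₊` and `B₋` terms cancel and the rest collapses to
`-(B₊ + A₋) (η₊ η₋' - η₊' η₋) / W = -(B₊ + A₋) = -∫ η₊ η₋ δV`.
-/

open MeasureTheory Set

theorem hasDerivAt_setIntegral_Iio {g : ℝ → ℝ} (hg : Continuous g) (hgi : Integrable g)
    (x : ℝ) : HasDerivAt (fun t => ∫ y in Iio t, g y) (g x) x := by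
  have hsplit : (fun t => ∫ y in Iio t, g y)
      = fun t => (∫ y in Iic 0, g y) + ∫ y in 0..t, g y := by
    funext t
    rw [← integral_Iic_eq_integral_Iio, ← intervalIntegral.integral_Iic_sub_Iic
      hgi.integrableOn hgi.integrableOn, add_sub_cancel]
  rw [hsplit]
  exact (intervalIntegral.integral_hasDerivAt_right (hg.intervalIntegrable 0 x)
    (hg.stronglyMeasurableAtFilter _ _) hg.continuousAt).const_add _

theorem hasDerivAt_setIntegral_Ici {g : ℝ → ℝ} (hg : Continuous g) (hgi : Integrable g)
    (x : ℝ) : HasDerivAt (fun t => ∫ y in Ici t, g y) (-g x) x := by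
  have hsplit : (fun t => ∫ y in Ici t, g y)
      = fun t => (∫ y, g y) - ∫ y in Iio t, g y := by
    funext t
    rw [← intervalIntegral.integral_Iio_add_Ici hgi.integrableOn hgi.integrableOn,
      add_sub_cancel_left]
  rw [hsplit]
  exact (hasDerivAt_setIntegral_Iio hg hgi x).const_sub _

noncomputable def greenIntegral (ηp ηm g : ℝ → ℝ) (t : ℝ) : ℝ :=
  ηm t * (∫ y in Ici t, ηp y * g y) + ηp t * ∫ y in Iio t, ηm y * g y

theorem integral_ite_mul_eq_greenIntegral {ηp ηm g : ℝ → ℝ} (hp : Continuous ηp)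
    (hm : Continuous ηm) (hg : Continuous g) (hgc : HasCompactSupport g) (w t : ℝ) :
    ∫ y, (if t ≤ y then ηm t * ηp y / w else ηp t * ηm y / w) * g y
      = greenIntegral ηp ηm g t / w := by
  have hint (η : ℝ → ℝ) (hη : Continuous η) (c : ℝ) :
      Integrable fun y => c * (η y * g y) :=
    ((hη.mul hg).integrable_of_hasCompactSupport hgc.mul_left).const_mul c
  have hpiece : (fun y => (if t ≤ y then ηm t * ηp y / w else ηp t * ηm y / w) * g y)
      = (Ici t).piecewise (fun y => ηm t / w * (ηp y * g y))
          (fun y => ηp t / w * (ηm y * g y)) := by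
    funext y
    by_cases h : t ≤ y <;> simp only [Set.piecewise, mem_Ici, h, if_true, if_false] <;> ring
  rw [hpiece, integral_piecewise measurableSet_Ici (hint ηp hp _).integrableOn
    (hint ηm hm _).integrableOn, compl_Ici, integral_const_mul, integral_const_mul,
    greenIntegral]
  ring

theorem hasDerivAt_greenIntegral {ηp ηm g : ℝ → ℝ} (hp : Continuous ηp)
    (hm : Continuous ηm) (hg : Continuous g) (hgc : HasCompactSupport g) {x : ℝ}
    (hpx : DifferentiableAt ℝ ηp x) (hmx : DifferentiableAt ℝ ηm x) :
    HasDerivAt (greenIntegral ηp ηm g)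
      (deriv ηm x * (∫ y in Ici x, ηp y * g y) + deriv ηp x * ∫ y in Iio x, ηm y * g y)
      x := by
  have hint (η : ℝ → ℝ) (hη : Continuous η) : Integrable fun y => η y * g y :=
    (hη.mul hg).integrable_of_hasCompactSupport hgc.mul_left
  have hA : HasDerivAt (fun t => ∫ y in Ici t, ηp y * g y) (-(ηp x * g x)) x :=
    hasDerivAt_setIntegral_Ici (hp.mul hg) (hint ηp hp) x
  have hB : HasDerivAt (fun t => ∫ y in Iio t, ηm y * g y) (ηm x * g x) x :=
    hasDerivAt_setIntegral_Iio (hm.mul hg) (hint ηm hm) x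
  -- the terms `∓ ηm x * ηp x * g x` from the moving limits cancel
  exact ((hmx.hasDerivAt.mul hA).add (hpx.hasDerivAt.mul hB)).congr_deriv (by ring)

theorem stmt_11_general (ηp ηm : ℝ → ℝ)
    (hp : ContDiff ℝ 2 ηp) (hm : ContDiff ℝ 2 ηm)
    (w : ℝ) (hw : w ≠ 0)
    (hwron : ∀ x, ηp x * deriv ηm x - deriv ηp x * ηm x = w)
    (δV : ℝ → ℝ) (hδV : Continuous δV) (hcs : HasCompactSupport δV)
    (q : ℝ → ℝ → ℝ)
    (hq : ∀ x y, q x y = if x ≤ y then ηm x * ηp y / w else ηp x * ηm y / w)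
    (δηp δηm : ℝ → ℝ)
    (hδηp : ∀ x, δηp x = -∫ y : ℝ, q x y * δV y * ηp y)
    (hδηm : ∀ x, δηm x = -∫ y : ℝ, q x y * δV y * ηm y) :
    ∀ x : ℝ, δηp x * deriv ηm x + ηp x * deriv δηm x - deriv δηp x * ηm x
        - deriv ηp x * δηm x = -∫ y : ℝ, ηp y * ηm y * δV y := by
  intro x
  have hpc := hp.continuous
  have hmc := hm.continuous
  have hpx : DifferentiableAt ℝ ηp x := hp.differentiable (by norm_num) x
  have hmx : DifferentiableAt ℝ ηm x := hm.differentiable (by norm_num) x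
  have hvar (η δη : ℝ → ℝ) (hη : Continuous η)
      (hδη : ∀ t, δη t = -∫ y, q t y * δV y * η y) :
      δη = fun t => -(greenIntegral ηp ηm (fun y => δV y * η y) t / w) := by
    funext t
    rw [hδη, ← integral_ite_mul_eq_greenIntegral (g := fun y => δV y * η y) hpc hmc
      (hδV.mul hη) hcs.mul_right]
    simp_rw [hq, mul_assoc]
  have hderiv (η : ℝ → ℝ) (hη : Continuous η) :
      deriv (fun t => -(greenIntegral ηp ηm (fun y => δV y * η y) t / w)) x
        = -((deriv ηm x * (∫ y in Ici x, ηp y * (δV y * η y))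
          + deriv ηp x * ∫ y in Iio x, ηm y * (δV y * η y)) / w) :=
    ((hasDerivAt_greenIntegral hpc hmc (hδV.mul hη) hcs.mul_right hpx hmx).div_const w).neg.deriv
  have hInt : Integrable fun y => ηp y * ηm y * δV y :=
    ((hpc.mul hmc).mul hδV).integrable_of_hasCompactSupport hcs.mul_left
  have htotal : (∫ y in Iio x, ηm y * (δV y * ηp y)) + ∫ y in Ici x, ηp y * (δV y * ηm y)
      = ∫ y, ηp y * ηm y * δV y := by
    rw [← intervalIntegral.integral_Iio_add_Ici hInt.integrableOn hInt.integrableOn]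
    congr 1 <;> congr 1 <;> ext y <;> ring
  rw [hvar ηp δηp hpc hδηp, hvar ηm δηm hmc hδηm, hderiv ηp hpc, hderiv ηm hmc,
    ← htotal]
  simp only [greenIntegral]
  generalize (∫ y in Iio x, ηm y * (δV y * ηp y)) = Bp
  generalize (∫ y in Ici x, ηp y * (δV y * ηm y)) = Am
  field_simp
  linear_combination (-Bp - Am) * hwron x

/-- The first variation of the Wronskian with respect to the potential:
`δW(x) = -∫ η₊ η₋ δV`, independently of `x`. -/
theorem stmt_11 (V ηp ηm : ℝ → ℝ) (hV : Continuous V)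
    (hp : ContDiff ℝ 2 ηp) (hm : ContDiff ℝ 2 ηm)
    (heqp : ∀ x, deriv (deriv ηp) x = V x * ηp x)
    (heqm : ∀ x, deriv (deriv ηm) x = V x * ηm x)
    (w : ℝ) (hw : w ≠ 0)
    (hwron : ∀ x, ηp x * deriv ηm x - deriv ηp x * ηm x = w)
    (δV : ℝ → ℝ) (hδV : Continuous δV) (hcs : HasCompactSupport δV)
    (q : ℝ → ℝ → ℝ)
    (hq : ∀ x y, q x y = if x ≤ y then ηm x * ηp y / w else ηp x * ηm y / w)
    (δηp δηm : ℝ → ℝ)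
    (hδηp : ∀ x, δηp x = -∫ y : ℝ, q x y * δV y * ηp y)
    (hδηm : ∀ x, δηm x = -∫ y : ℝ, q x y * δV y * ηm y) :
    ∀ x : ℝ, δηp x * deriv ηm x + ηp x * deriv δηm x - deriv δηp x * ηm x
        - deriv ηp x * δηm x = -∫ y : ℝ, ηp y * ηm y * δV y :=
  stmt_11_general ηp ηm hp hm w hw hwron δV hδV hcs q hq δηp δηm hδηp hδηm
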